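/- arXiv:2112.14404 — 6 statements merged into one kernel-verified Lean document; each statement's English description precedes it below -/
import Mathlib

section
/- Let $b \in \mathbb{R}^p \setminus \{0\}$ and $c \in \mathbb{R}^p$ with $\|c\| < 1$. Then the point $x^* = c - \frac{\langle b, c\rangle + \sqrt{\langle b, c\rangle^2 - \|b\|^2(\|c\|^2 - 1)}}{\|b\|^2} b$ satisfies $\|x^*\| = 1$ and is a global minimizer of $x \mapsto \frac{\langle b, x\rangle}{1 - \langle c, x\rangle}$ over the unit sphere $\{x \in \mathbb{R}^p : \|x\| = 1\}$. -/
/-!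
The minimum value is the negative root `m` of `(‖c‖² - 1) m² + 2 ⟪b, c⟫ m + ‖b‖² = 0`, which says
`‖b + m • c‖ = -m`. For a unit vector `x`, Cauchy–Schwarz gives
`⟪b, x⟫ + m ⟪c, x⟫ = ⟪b + m • c, x⟫ ≥ -‖b + m • c‖ = m`, i.e. `⟪b, x⟫ / (1 - ⟪c, x⟫) ≥ m`, with equality
at the unit vector `m⁻¹ • (b + m • c) = c + m⁻¹ • b`, which is `x*` since `m⁻¹` is the other root
`-(⟪b, c⟫ + √…) / ‖b‖²` of the reciprocal quadratic.
-/

open RealInnerProductSpace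

section Scalar

variable {β B C s : ℝ}

lemma lt_of_sq_eq_sq_sub_mul (hs : 0 ≤ s) (hB : 0 < B) (hC : C < 1)
    (hs2 : s ^ 2 = β ^ 2 - B * (C - 1)) : β < s := by
  nlinarith [mul_pos hB (sub_pos.2 hC)]

lemma quadratic_eq_zero_of_sq_eq (hC : C < 1) (hs2 : s ^ 2 = β ^ 2 - B * (C - 1)) :
    B + 2 * ((β - s) / (1 - C)) * β + ((β - s) / (1 - C)) ^ 2 * (C - 1) = 0 := by
  have hC' : 1 - C ≠ 0 := by linarith
  field_simp
  linear_combination (-1 + C) * hs2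

lemma div_eq_neg_inv_of_sq_eq (hB : 0 < B) (hC : C < 1) (hs2 : s ^ 2 = β ^ 2 - B * (C - 1))
    (hβs : β ≠ s) : (β + s) / B = -((β - s) / (1 - C))⁻¹ := by
  have hC' : 1 - C ≠ 0 := by linarith
  have hβs' : β - s ≠ 0 := sub_ne_zero.2 hβs
  rw [inv_div, div_eq_iff hB.ne']
  field_simp
  linear_combination -hs2

end Scalar

section InnerProductSpace

variable {E : Type*} [NormedAddCommGroup E] [InnerProductSpace ℝ E]

lemma inner_lt_one_of_norm_lt_one {c x : E} (hc : ‖c‖ < 1) (hx : ‖x‖ = 1) : ⟪c, x⟫ < 1 :=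
  calc ⟪c, x⟫ ≤ ‖c‖ * ‖x‖ := real_inner_le_norm c x
    _ < 1 := by rwa [hx, mul_one]

lemma norm_add_smul_eq_neg {b c : E} {m : ℝ} (hm : m < 0)
    (h : ‖b‖ ^ 2 + 2 * m * ⟪b, c⟫ + m ^ 2 * (‖c‖ ^ 2 - 1) = 0) : ‖b + m • c‖ = -m := by
  rw [← sq_eq_sq₀ (norm_nonneg _) (by linarith), norm_add_sq_real, real_inner_smul_right,
    norm_smul, mul_pow, Real.norm_eq_abs, sq_abs]
  linear_combination h

lemma mul_one_sub_inner_le_inner {b c x : E} {m : ℝ} (hbc : ‖b + m • c‖ = -m) (hx : ‖x‖ = 1) :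
    m * (1 - ⟪c, x⟫) ≤ ⟪b, x⟫ := by
  have h := real_inner_le_norm (-(b + m • c)) x
  rw [norm_neg, hbc, hx, inner_neg_left, inner_add_left, real_inner_smul_left] at h
  linarith

lemma norm_add_inv_smul_eq_one {b c : E} {m : ℝ} (hm : m ≠ 0) (hbc : ‖b + m • c‖ = -m) :
    ‖c + m⁻¹ • b‖ = 1 ∧ ⟪b, c + m⁻¹ • b⟫ = m * (1 - ⟪c, c + m⁻¹ • b⟫) := by
  have hx : c + m⁻¹ • b = m⁻¹ • (b + m • c) := by
    rw [smul_add, smul_smul, inv_mul_cancel₀ hm, one_smul, add_comm]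
  have hm' : m < 0 := lt_of_le_of_ne (by linarith [norm_nonneg (b + m • c)]) hm
  have hnorm : ‖c + m⁻¹ • b‖ = 1 := by
    rw [hx, norm_smul, hbc, norm_inv, Real.norm_of_nonpos hm'.le, inv_mul_cancel₀ (neg_ne_zero.2 hm)]
  refine ⟨hnorm, ?_⟩
  have h : ⟪b + m • c, c + m⁻¹ • b⟫ = m := by
    rw [hx, real_inner_smul_right, real_inner_self_eq_norm_sq, hbc]
    field_simp
  rw [inner_add_left, real_inner_smul_left] at h
  linarith

theorem add_inv_smul_minimizes_inner_div {b c : E} {m : ℝ} (hm : m ≠ 0) (hbc : ‖b + m • c‖ = -m)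
    (hc : ‖c‖ < 1) :
    ‖c + m⁻¹ • b‖ = 1 ∧ ∀ x : E, ‖x‖ = 1 →
      ⟪b, c + m⁻¹ • b⟫ / (1 - ⟪c, c + m⁻¹ • b⟫) ≤ ⟪b, x⟫ / (1 - ⟪c, x⟫) := by
  obtain ⟨hnorm, hval⟩ := norm_add_inv_smul_eq_one hm hbc
  refine ⟨hnorm, fun x hx => ?_⟩
  have hden : 0 < 1 - ⟪c, c + m⁻¹ • b⟫ := sub_pos.2 (inner_lt_one_of_norm_lt_one hc hnorm)
  rw [hval, mul_div_cancel_right₀ _ hden.ne', le_div_iff₀ (sub_pos.2 (inner_lt_one_of_norm_lt_one hc hx))]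
  exact mul_one_sub_inner_le_inner hbc hx

end InnerProductSpace

theorem stmt1 {p : ℕ} (b c : EuclideanSpace ℝ (Fin p)) (hb : b ≠ 0) (hc : ‖c‖ < 1) :
    let xstar := c - ((⟪b, c⟫ + Real.sqrt (⟪b, c⟫ ^ 2 - ‖b‖ ^ 2 * (‖c‖ ^ 2 - 1))) / ‖b‖ ^ 2) • b
    ‖xstar‖ = 1 ∧ ∀ x : EuclideanSpace ℝ (Fin p), ‖x‖ = 1 →
      ⟪b, xstar⟫ / (1 - ⟪c, xstar⟫) ≤ ⟪b, x⟫ / (1 - ⟪c, x⟫) := by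
  intro xstar
  set s := Real.sqrt (⟪b, c⟫ ^ 2 - ‖b‖ ^ 2 * (‖c‖ ^ 2 - 1))
  have hB : 0 < ‖b‖ ^ 2 := by positivity
  have hC : ‖c‖ ^ 2 < 1 := by nlinarith [norm_nonneg c]
  have hs : 0 ≤ s := Real.sqrt_nonneg _
  have hs2 : s ^ 2 = ⟪b, c⟫ ^ 2 - ‖b‖ ^ 2 * (‖c‖ ^ 2 - 1) :=
    Real.sq_sqrt (by nlinarith [sq_nonneg ⟪b, c⟫])
  have hβs := lt_of_sq_eq_sq_sub_mul hs hB hC hs2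
  set m := (⟪b, c⟫ - s) / (1 - ‖c‖ ^ 2)
  have hm : m < 0 := div_neg_of_neg_of_pos (by linarith) (by linarith)
  have hxstar : xstar = c + m⁻¹ • b := by
    change c - ((⟪b, c⟫ + s) / ‖b‖ ^ 2) • b = _
    rw [div_eq_neg_inv_of_sq_eq hB hC hs2 hβs.ne, neg_smul, sub_neg_eq_add]
  rw [hxstar]
  exact add_inv_smul_minimizes_inner_div hm.ne
    (norm_add_smul_eq_neg hm (quadratic_eq_zero_of_sq_eq hC hs2)) hc
end

section
/- Suppose $P_1, P_2: X \to \mathbb{R}$ are convex with $\mathcal{F} = \{x : P_1(x) - P_2(x) \le \sigma\}$, and suppose the 'uniform Slater condition' holds: for every $y \in \mathcal{F}$ and every $\xi \in \partial P_2(y)$ there exists $x^\odot$ with $P_1(x^\odot) - P_2(y) - \langle\xi, x^\odot - y\rangle < \sigma$. Then for every $\bar{x} \in \mathcal{F}$ with $P_1(\bar{x}) - P_2(\bar{x}) = \sigma$, one has $0 \notin \partial P_1(\bar{x}) - \partial P_2(\bar{x})$, i.e., $\partial P_1(\bar{x}) \cap \partial P_2(\bar{x}) = \emptyset$. -/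
open RealInnerProductSpace

theorem stmt5_general {X : Type*} [NormedAddCommGroup X] [InnerProductSpace ℝ X]
    (P₁ P₂ : X → ℝ)
    (σ : ℝ)
    (slater : ∀ y : X, P₁ y - P₂ y ≤ σ → ∀ ξ : X, (∀ x, P₂ y + ⟪ξ, x - y⟫ ≤ P₂ x) →
      ∃ xo : X, P₁ xo - P₂ y - ⟪ξ, xo - y⟫ < σ)
    (xb : X) (hxb : P₁ xb - P₂ xb ≤ σ) (heq : P₁ xb - P₂ xb = σ) :
    ¬ ∃ ξ : X, (∀ x, P₁ xb + ⟪ξ, x - xb⟫ ≤ P₁ x) ∧ (∀ x, P₂ xb + ⟪ξ, x - xb⟫ ≤ P₂ x) := by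
  rintro ⟨ξ, hξ₁, hξ₂⟩
  obtain ⟨xo, hxo⟩ := slater xb hxb ξ hξ₂
  -- by the subgradient inequality of `P₁` at `xo`, the Slater value at `xo` is at least `P₁ xb - P₂ xb = σ`
  linarith [hξ₁ xo]

theorem stmt5 {X : Type*} [NormedAddCommGroup X] [InnerProductSpace ℝ X]
    [FiniteDimensional ℝ X]
    (P₁ P₂ : X → ℝ) (hP₁ : ConvexOn ℝ Set.univ P₁) (hP₂ : ConvexOn ℝ Set.univ P₂)
    (σ : ℝ) (hσ : 0 < σ)
    (slater : ∀ y : X, P₁ y - P₂ y ≤ σ → ∀ ξ : X, (∀ x, P₂ y + ⟪ξ, x - y⟫ ≤ P₂ x) →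
      ∃ xo : X, P₁ xo - P₂ y - ⟪ξ, xo - y⟫ < σ)
    (xb : X) (hxb : P₁ xb - P₂ xb ≤ σ) (heq : P₁ xb - P₂ xb = σ) :
    ¬ ∃ ξ : X, (∀ x, P₁ xb + ⟪ξ, x - xb⟫ ≤ P₁ x) ∧ (∀ x, P₂ xb + ⟪ξ, x - xb⟫ ≤ P₂ x) :=
  stmt5_general P₁ P₂ σ slater xb hxb heq
end

section
/- Let $\mathcal{K} \subseteq \mathbb{R}^m$ be a closed convex cone and $g : X \to \mathbb{R}^m$ be $\mathcal{K}$-convex, i.e., $\lambda g(x) + (1-\lambda) g(y) \in g(\lambda x + (1-\lambda) y) + \mathcal{K}$ for all $x, y \in X$ and $\lambda \in [0,1]$. Let $\Omega = \{x \in X : 0 \in g(x) + \mathcal{K}\}$ and suppose there exist $x^s \in \Omega$ and $\delta > 0$ such that the closed ball $B(0,\delta) \subseteq g(x^s) + \mathcal{K}$. Then for all $x \in X$, $\mathrm{dist}(x, \Omega) \le \frac{\|x - x^s\|}{\delta} \, \mathrm{dist}(0, g(x) + \mathcal{K})$. -/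
/-!
The set `{(x, y) | y ∈ g x + K}` is convex. Given `y ∈ g x + K` with `r = ‖y‖`, the point
`w = -(δ / r) • y` lies in `B(0, δ) ⊆ g xs + K`, and the convex combination of `(xs, w)` and
`(x, y)` with weights `l = r / (r + δ)` and `1 - l` has second coordinate `0`. Hence
`z = l • xs + (1 - l) • x ∈ Ω` and `‖x - z‖ = l ‖x - xs‖ ≤ ‖x - xs‖ r / δ`; taking the infimum
over `y` gives the bound.
-/

open Pointwise Set Metric

theorem Set.mem_singleton_add_iff_sub_mem {G : Type*} [AddCommGroup G] {a y : G} {K : Set G} :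
    y ∈ {a} + K ↔ y - a ∈ K := by
  simp [Set.singleton_add, neg_add_eq_sub]

theorem Convex.add_mem_of_pos_smul_mem {F : Type*} [AddCommGroup F] [Module ℝ F] {K : Set F}
    (hKconv : Convex ℝ K) (hKcone : ∀ t : ℝ, 0 < t → ∀ v ∈ K, t • v ∈ K) {a b : F}
    (ha : a ∈ K) (hb : b ∈ K) : a + b ∈ K := by
  have hmid : (1 / 2 : ℝ) • a + (1 / 2 : ℝ) • b ∈ K :=
    hKconv ha hb (by norm_num) (by norm_num) (by norm_num)
  convert hKcone 2 two_pos _ hmid using 1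
  module

def ConeConvex {E F : Type*} [AddCommGroup E] [Module ℝ E] [AddCommGroup F] [Module ℝ F]
    (K : Set F) (g : E → F) : Prop :=
  ∀ x y : E, ∀ l : ℝ, l ∈ Icc (0 : ℝ) 1 → l • g x + (1 - l) • g y - g (l • x + (1 - l) • y) ∈ K

namespace ConeConvex

variable {E F : Type*} {K : Set F} {g : E → F}

theorem convex_setOf_mem_singleton_add [AddCommGroup E] [Module ℝ E] [AddCommGroup F]
    [Module ℝ F] (hg : ConeConvex K g) (hKconv : Convex ℝ K)
    (hKcone : ∀ t : ℝ, 0 < t → ∀ v ∈ K, t • v ∈ K) :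
    Convex ℝ {p : E × F | p.2 ∈ {g p.1} + K} := by
  rintro ⟨x, y⟩ hy ⟨x', y'⟩ hy' a b ha hb hab
  simp only [mem_ofPred_eq, mem_singleton_add_iff_sub_mem, Prod.smul_mk, Prod.mk_add_mk]
    at hy hy' ⊢
  have hgap := hg x x' a ⟨ha, by linarith⟩
  rw [show 1 - a = b by linarith] at hgap
  convert hKconv.add_mem_of_pos_smul_mem hKcone hgap (hKconv hy hy' ha hb hab) using 1
  module

theorem infDist_le_mul_norm [SeminormedAddCommGroup E] [NormedSpace ℝ E]
    [NormedAddCommGroup F] [NormedSpace ℝ F] (hg : ConeConvex K g) (hKconv : Convex ℝ K)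
    (hKcone : ∀ t : ℝ, 0 < t → ∀ v ∈ K, t • v ∈ K) {xs : E} {δ : ℝ} (hδ : 0 < δ)
    (hball : closedBall 0 δ ⊆ {g xs} + K) {x : E} {y : F} (hy : y ∈ {g x} + K) :
    infDist x {x | -g x ∈ K} ≤ ‖x - xs‖ / δ * ‖y‖ := by
  set r := ‖y‖
  set l := r / (r + δ)
  have hrδ : 0 < r + δ := by positivity
  have hl : l ∈ Icc (0 : ℝ) 1 := ⟨by positivity, (div_le_one hrδ).2 (by linarith)⟩
  set w := -(δ / r) • y
  have hw : w ∈ closedBall 0 δ := by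
    rw [mem_closedBall_zero_iff, norm_smul, norm_neg, Real.norm_of_nonneg (by positivity)]
    rcases eq_or_lt_of_le (norm_nonneg y) with hr | hr
    · rw [← hr, mul_zero]
      exact hδ.le
    · rw [div_mul_cancel₀ _ hr.ne']
  have hcomb : l • w + (1 - l) • y = 0 := by
    rcases eq_or_ne y 0 with rfl | hy0
    · simp [w]
    · have hr : r ≠ 0 := norm_ne_zero_iff.2 hy0
      have hcoef : l * -(δ / r) + (1 - l) = 0 := by
        simp only [l]
        field_simp
        ring
      rw [smul_smul, ← add_smul, hcoef, zero_smul]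
  have hz : l • xs + (1 - l) • x ∈ {x | -g x ∈ K} := by
    have h := hg.convex_setOf_mem_singleton_add hKconv hKcone (x := (xs, w)) (y := (x, y))
      (by simpa using hball hw) hy hl.1 (sub_nonneg.2 hl.2) (add_sub_cancel l 1)
    simpa [hcomb, mem_singleton_add_iff_sub_mem] using h
  calc infDist x {x | -g x ∈ K} ≤ dist x (l • xs + (1 - l) • x) := infDist_le_dist_of_mem hz
    _ = l * ‖x - xs‖ := by
      rw [dist_eq_norm, show x - (l • xs + (1 - l) • x) = l • (x - xs) by module, norm_smul,
        Real.norm_of_nonneg hl.1]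
    _ ≤ ‖x - xs‖ / δ * r := by
      rw [div_mul_comm]
      gcongr
      exact le_add_of_nonneg_left (norm_nonneg y)

end ConeConvex

theorem stmt11_general {X : Type*} [NormedAddCommGroup X] [InnerProductSpace ℝ X]
    {m : ℕ}
    (K : Set (EuclideanSpace ℝ (Fin m)))
    (hKconv : Convex ℝ K) (hKcone : ∀ t : ℝ, 0 < t → ∀ v ∈ K, t • v ∈ K)
    (g : X → EuclideanSpace ℝ (Fin m))
    (hg : ∀ x y : X, ∀ l : ℝ, l ∈ Set.Icc (0:ℝ) 1 →
      l • g x + (1 - l) • g y - g (l • x + (1 - l) • y) ∈ K)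
    (Ω : Set X) (hΩ : Ω = {x : X | -g x ∈ K})
    (xs : X) (δ : ℝ) (hδ : 0 < δ)
    (hball : Metric.closedBall (0 : EuclideanSpace ℝ (Fin m)) δ ⊆ {g xs} + K)
    (x : X) :
    Metric.infDist x Ω ≤ ‖x - xs‖ / δ * Metric.infDist 0 ({g x} + K) := by
  subst hΩ
  have hxs : -g xs ∈ K := by
    simpa [mem_singleton_add_iff_sub_mem] using hball (mem_closedBall_self hδ.le)
  have : Nonempty ↥({g x} + K) :=
    ⟨⟨g x - g xs, mem_singleton_add_iff_sub_mem.2 (by simpa using hxs)⟩⟩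
  rw [infDist_eq_iInf (s := {g x} + K), Real.mul_iInf_of_nonneg (by positivity)]
  refine le_ciInf fun y => ?_
  rw [dist_zero_left]
  exact ConeConvex.infDist_le_mul_norm hg hKconv hKcone hδ hball y.2

theorem stmt11 {X : Type*} [NormedAddCommGroup X] [InnerProductSpace ℝ X]
    [FiniteDimensional ℝ X] {m : ℕ}
    (K : Set (EuclideanSpace ℝ (Fin m))) (hKcl : IsClosed K)
    (hKconv : Convex ℝ K) (hKcone : ∀ t : ℝ, 0 < t → ∀ v ∈ K, t • v ∈ K)
    (g : X → EuclideanSpace ℝ (Fin m))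
    (hg : ∀ x y : X, ∀ l : ℝ, l ∈ Set.Icc (0:ℝ) 1 →
      l • g x + (1 - l) • g y - g (l • x + (1 - l) • y) ∈ K)
    (Ω : Set X) (hΩ : Ω = {x : X | -g x ∈ K})
    (xs : X) (hxs : xs ∈ Ω) (δ : ℝ) (hδ : 0 < δ)
    (hball : Metric.closedBall (0 : EuclideanSpace ℝ (Fin m)) δ ⊆ {g xs} + K)
    (x : X) :
    Metric.infDist x Ω ≤ ‖x - xs‖ / δ * Metric.infDist 0 ({g x} + K) :=
  stmt11_general K hKconv hKcone g hg Ω hΩ xs δ hδ hball x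
end

section
/- Let $\mathcal{K} = \mathbb{R}_+$ and $g : X \to \mathbb{R}$ be a convex function. Suppose there exist $x^s$ with $g(x^s) \le -\delta < 0$. Let $\Omega = \{x : g(x) \le 0\}$. Then for all $x \in X$, $\mathrm{dist}(x, \Omega) \le \frac{\|x - x^s\|}{\delta}\,[g(x)]_+$, where $[t]_+ = \max\{t, 0\}$. -/
/-!
If `g x > 0`, convexity of `g` along the segment from `x` to the Slater point `xs` puts the point
at parameter `t = g x / (g x - g xs)` into the sublevel set `{g ≤ 0}`, at distance
`t ‖x - xs‖ ≤ ‖x - xs‖ g x / δ` from `x`.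
-/

section

open AffineMap Metric Set

variable {E : Type*} [SeminormedAddCommGroup E] [NormedSpace ℝ E] {g : E → ℝ} {x xs : E}

theorem ConvexOn.map_lineMap_le_zero (hg : ConvexOn ℝ univ g) (hxs : g xs < 0) (hx : 0 ≤ g x) :
    g (lineMap x xs (g x / (g x - g xs))) ≤ 0 := by
  set t := g x / (g x - g xs)
  have hpos : 0 < g x - g xs := by linarith
  have ht0 : 0 ≤ t := div_nonneg hx hpos.le
  have ht1 : t ≤ 1 := (div_le_one hpos).2 (by linarith)
  have hinterp : (1 - t) * g x + t * g xs = 0 := by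
    simp only [t]; field_simp; ring
  rw [lineMap_apply_module]
  simpa only [smul_eq_mul, hinterp] using
    hg.2 (mem_univ x) (mem_univ xs) (sub_nonneg.2 ht1) ht0 (sub_add_cancel 1 t)

theorem ConvexOn.infDist_setOf_le_zero_le (hg : ConvexOn ℝ univ g) (hxs : g xs < 0) (x : E) :
    infDist x {z | g z ≤ 0} ≤ max (g x) 0 / (max (g x) 0 - g xs) * ‖x - xs‖ := by
  rcases le_or_gt (g x) 0 with hx | hx
  · rw [infDist_zero_of_mem (show x ∈ {z | g z ≤ 0} from hx), max_eq_right hx, zero_div, zero_mul]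
  · rw [max_eq_left hx.le, ← dist_eq_norm, ← abs_of_nonneg (div_nonneg hx.le (by linarith)),
      ← Real.norm_eq_abs, ← dist_left_lineMap]
    exact infDist_le_dist_of_mem (hg.map_lineMap_le_zero hxs hx.le)

end

theorem stmt12_general {X : Type*} [NormedAddCommGroup X] [InnerProductSpace ℝ X]
    (g : X → ℝ) (hg : ConvexOn ℝ Set.univ g)
    (xs : X) (δ : ℝ) (hδ : 0 < δ) (hxs : g xs ≤ -δ) (x : X) :
    Metric.infDist x {z : X | g z ≤ 0} ≤ ‖x - xs‖ / δ * max (g x) 0 := by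
  have hgap : δ ≤ max (g x) 0 - g xs := by linarith [le_max_right (g x) 0]
  calc Metric.infDist x {z : X | g z ≤ 0}
      ≤ max (g x) 0 / (max (g x) 0 - g xs) * ‖x - xs‖ :=
        hg.infDist_setOf_le_zero_le (by linarith) x
    _ ≤ max (g x) 0 / δ * ‖x - xs‖ := by gcongr
    _ = ‖x - xs‖ / δ * max (g x) 0 := by ring

theorem stmt12 {X : Type*} [NormedAddCommGroup X] [InnerProductSpace ℝ X]
    [FiniteDimensional ℝ X]
    (g : X → ℝ) (hg : ConvexOn ℝ Set.univ g)
    (xs : X) (δ : ℝ) (hδ : 0 < δ) (hxs : g xs ≤ -δ) (x : X) :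
    Metric.infDist x {z : X | g z ≤ 0} ≤ ‖x - xs‖ / δ * max (g x) 0 :=
  stmt12_general g hg xs δ hδ hxs x
end

section
/- Let $a \in \mathbb{R}^n$, $\sigma > 0$, and let $\xi \in \mathbb{R}^n$ satisfy $|\xi_i| \le \mu < 1$ for all $i$. Consider the problem $\min \{\langle a, x\rangle : \|x\|_1 - \langle\xi, x\rangle \le \sigma\}$, with $a \ne 0$. Let $i_0 \in \arg\min_i \left\{\frac{-|a_i|}{1 + \xi_i\,\mathrm{sgn}(a_i)}\right\}$ where $\mathrm{sgn}(t) = t/|t|$ for $t \ne 0$ and $\mathrm{sgn}(0) = 1$. Then the vector $x^*$ with $x^*_{i_0} = \frac{-\sigma\,\mathrm{sgn}(a_{i_0})}{1 + \xi_{i_0}\mathrm{sgn}(a_{i_0})}$ and $x^*_i = 0$ for $i \ne i_0$ is an optimal solution. -/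
/-! Weak duality with the multiplier `m = -|a i₀| / (1 + ξ i₀ sgn (a i₀)) ≤ 0`: the choice of `i₀`
makes `|a i + m ξ i| ≤ -m` for every `i`, so `a i t ≥ m (|t| - ξ i t)` coordinatewise, and summing
gives `⟪a, x⟫ ≥ m (‖x‖₁ - ⟪ξ, x⟫) ≥ m σ` on the feasible set. The vector `x*` is feasible with
equality in the constraint and attains `⟪a, x*⟫ = m σ`. -/

noncomputable def sgn (t : ℝ) : ℝ := if t = 0 then 1 else t / |t|

lemma sgn_eq_one_or_eq_neg_one (t : ℝ) : sgn t = 1 ∨ sgn t = -1 := by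
  unfold sgn
  rcases lt_trichotomy t 0 with h | rfl | h
  · right; rw [if_neg h.ne, abs_of_neg h, div_neg, div_self h.ne]
  · left; rw [if_pos rfl]
  · left; rw [if_neg h.ne', abs_of_pos h, div_self h.ne']

lemma abs_sgn (t : ℝ) : |sgn t| = 1 := by
  rcases sgn_eq_one_or_eq_neg_one t with h | h <;> simp [h]

lemma mul_sgn_self (t : ℝ) : t * sgn t = |t| := by
  unfold sgn
  split_ifs with h
  · simp [h]
  · rw [mul_div_assoc', div_eq_iff (abs_ne_zero.mpr h), abs_mul_abs_self]

lemma one_add_mul_sgn_pos {ξ : ℝ} (hξ : |ξ| < 1) (t : ℝ) : 0 < 1 + ξ * sgn t := by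
  have h : |ξ * sgn t| < 1 := by rwa [abs_mul, abs_sgn, mul_one]
  linarith [(abs_lt.mp h).1]

lemma mul_abs_sub_mul_le {a ξ m : ℝ} (hξ : |ξ| ≤ 1) (hm : m ≤ 0)
    (h : m * (1 + ξ * sgn a) ≤ -|a|) (t : ℝ) : m * (|t| - ξ * t) ≤ a * t := by
  have hs := mul_sgn_self a
  have hξs : |ξ * sgn a| ≤ 1 := by rwa [abs_mul, abs_sgn, mul_one]
  have hdual : |(a + m * ξ) * sgn a| ≤ -m := by
    rw [abs_le]
    constructor <;> nlinarith [abs_le.mp hξs, abs_nonneg a]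
  have hdual' : |a + m * ξ| ≤ -m := by rwa [abs_mul, abs_sgn, mul_one] at hdual
  have := neg_abs_le ((a + m * ξ) * t)
  rw [abs_mul] at this
  nlinarith [mul_le_mul_of_nonneg_right hdual' (abs_nonneg t)]

lemma mul_le_sum_mul_of_feasible {ι : Type*} [Fintype ι] {a ξ x : ι → ℝ} {m σ : ℝ} (hm : m ≤ 0)
    (hcoord : ∀ i t, m * (|t| - ξ i * t) ≤ a i * t) (hx : ∑ i, |x i| - ∑ i, ξ i * x i ≤ σ) :
    m * σ ≤ ∑ i, a i * x i :=
  calc m * σ ≤ m * (∑ i, |x i| - ∑ i, ξ i * x i) := mul_le_mul_of_nonpos_left hx hm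
    _ = ∑ i, m * (|x i| - ξ i * x i) := by rw [← Finset.sum_sub_distrib, Finset.mul_sum]
    _ ≤ ∑ i, a i * x i := Finset.sum_le_sum fun i _ => hcoord i (x i)

theorem stmt13_general {n : ℕ} (a ξ : EuclideanSpace ℝ (Fin n)) (σ μ : ℝ) (hσ : 0 < σ)
    (hμ : μ < 1) (hξ : ∀ i, |ξ i| ≤ μ)
    (i₀ : Fin n)
    (hi₀ : ∀ i, (-|a i₀|) / (1 + ξ i₀ * sgn (a i₀)) ≤ (-|a i|) / (1 + ξ i * sgn (a i))) :
    let xstar : EuclideanSpace ℝ (Fin n) :=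
      WithLp.toLp 2 (fun i => if i = i₀ then (-σ * sgn (a i₀)) / (1 + ξ i₀ * sgn (a i₀)) else 0)
    (∑ i, |xstar i| - ∑ i, ξ i * xstar i ≤ σ) ∧
      ∀ x : EuclideanSpace ℝ (Fin n), (∑ i, |x i| - ∑ i, ξ i * x i ≤ σ) →
        ∑ i, a i * xstar i ≤ ∑ i, a i * x i := by
  intro xstar
  have hξ1 i : |ξ i| < 1 := (hξ i).trans_lt hμ
  have hc i : 0 < 1 + ξ i * sgn (a i) := one_add_mul_sgn_pos (hξ1 i) (a i)
  set c := 1 + ξ i₀ * sgn (a i₀)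
  set m := -|a i₀| / c
  have hm : m ≤ 0 := div_nonpos_of_nonpos_of_nonneg (neg_nonpos.mpr (abs_nonneg _)) (hc i₀).le
  have hmc i : m * (1 + ξ i * sgn (a i)) ≤ -|a i| := (le_div_iff₀ (hc i)).mp (hi₀ i)
  have hgauge : ∑ i, |xstar i| - ∑ i, ξ i * xstar i = σ := by
    have hc₀ := (hc i₀).ne'
    simp only [xstar, neg_mul, apply_ite, abs_div, abs_neg, abs_mul, abs_of_pos hσ, abs_sgn,
      mul_one, abs_of_pos (hc i₀), abs_zero, Finset.sum_ite_eq', Finset.mem_univ, if_true,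
      mul_zero]
    field_simp
    ring
  have hobj : ∑ i, a i * xstar i = m * σ := by
    simp only [xstar, neg_mul, mul_ite, mul_zero, Finset.sum_ite_eq', Finset.mem_univ, if_true,
      ← mul_sgn_self (a i₀), m, c]
    ring
  refine ⟨hgauge.le, fun x hx => hobj ▸ ?_⟩
  exact mul_le_sum_mul_of_feasible hm (fun i => mul_abs_sub_mul_le (hξ1 i).le hm (hmc i)) hx

theorem stmt13 {n : ℕ} (a ξ : EuclideanSpace ℝ (Fin n)) (σ μ : ℝ) (hσ : 0 < σ)
    (hμ : μ < 1) (hξ : ∀ i, |ξ i| ≤ μ) (ha : a ≠ 0)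
    (i₀ : Fin n)
    (hi₀ : ∀ i, (-|a i₀|) / (1 + ξ i₀ * sgn (a i₀)) ≤ (-|a i|) / (1 + ξ i * sgn (a i))) :
    let xstar : EuclideanSpace ℝ (Fin n) :=
      WithLp.toLp 2 (fun i => if i = i₀ then (-σ * sgn (a i₀)) / (1 + ξ i₀ * sgn (a i₀)) else 0)
    (∑ i, |xstar i| - ∑ i, ξ i * xstar i ≤ σ) ∧
      ∀ x : EuclideanSpace ℝ (Fin n), (∑ i, |x i| - ∑ i, ξ i * x i ≤ σ) →
        ∑ i, a i * xstar i ≤ ∑ i, a i * x i :=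
  stmt13_general a ξ σ μ hσ hμ hξ i₀ hi₀
end

section
/- Let $P_1 : X \to \mathbb{R}$ be strongly convex with modulus $\rho > 0$ and $P_2 : X \to \mathbb{R}$ convex, $\sigma > 0$. Let $x \in \mathcal{F} = \{z : P_1(z) - P_2(z) \le \sigma\}$, $\xi \in \partial P_2(x)$, and suppose $u$, $\lambda \ge \underline{\lambda} > 0$, $w \in \partial P_1(u)$ satisfy the KKT conditions $\nabla f(x) + \lambda(w - \xi) = 0$ and $\lambda\,(P_1(u) - \langle\xi, u - x\rangle - P_2(x) - \sigma) = 0$, for a differentiable $f$. Then $\langle\nabla f(x), u - x\rangle \le -\frac{\rho\,\underline{\lambda}}{2}\|x - u\|^2$. -/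
/-! When the constraint is active at `u`, the linearization `P₁ u - ⟪ξ, u - x⟫ - P₂ x` equals `σ`,
which is at least `P₁ x - P₂ x` by feasibility of `x`; comparing with the strong convexity
inequality for `P₁` at `u` evaluated at `x` gives `⟪w - ξ, u - x⟫ ≥ ρ/2 ‖x - u‖²`. The first KKT
condition turns this into the decrease estimate for `∇f(x) = -λ (w - ξ)`, and `λ ≥ λ̲` finishes. -/

open RealInnerProductSpace

theorem half_mul_sq_norm_le_inner_of_active {X : Type*} [NormedAddCommGroup X]
    [InnerProductSpace ℝ X] {P₁ P₂ : X → ℝ} {ρ σ : ℝ} {x u w ξ : X}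
    (hw : ∀ z : X, P₁ u + ⟪w, z - u⟫ + ρ / 2 * ‖z - u‖ ^ 2 ≤ P₁ z)
    (hx : P₁ x - P₂ x ≤ σ) (hactive : P₁ u - ⟪ξ, u - x⟫ - P₂ x - σ = 0) :
    ρ / 2 * ‖x - u‖ ^ 2 ≤ ⟪w - ξ, u - x⟫ := by
  have hwx := hw x
  have hsymm : ⟪w, x - u⟫ = -⟪w, u - x⟫ := by rw [← inner_neg_right, neg_sub]
  rw [inner_sub_left]
  linarith

theorem stmt18_general {X : Type*} [NormedAddCommGroup X] [InnerProductSpace ℝ X]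
    (P₁ P₂ : X → ℝ) (ρ σ lam lamb : ℝ)
    (hρ : 0 < ρ) (hlamb : 0 < lamb) (hlam : lamb ≤ lam)
    (x u w ξ gf : X)
    (hx : P₁ x - P₂ x ≤ σ)
    (hw : ∀ z : X, P₁ u + ⟪w, z - u⟫ + ρ / 2 * ‖z - u‖ ^ 2 ≤ P₁ z)
    (hKKT1 : gf + lam • (w - ξ) = 0)
    (hKKT2 : lam * (P₁ u - ⟪ξ, u - x⟫ - P₂ x - σ) = 0) :
    ⟪gf, u - x⟫ ≤ -(ρ * lamb / 2) * ‖x - u‖ ^ 2 := by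
  have hlam_pos : 0 < lam := hlamb.trans_le hlam
  have hactive := (mul_eq_zero.mp hKKT2).resolve_left hlam_pos.ne'
  have hgap := half_mul_sq_norm_le_inner_of_active hw hx hactive
  have hsq_nonneg : 0 ≤ ρ / 2 * ‖x - u‖ ^ 2 := by positivity
  calc ⟪gf, u - x⟫ = -lam * ⟪w - ξ, u - x⟫ := by
        rw [eq_neg_of_add_eq_zero_left hKKT1, inner_neg_left, real_inner_smul_left, neg_mul]
    _ ≤ -lam * (ρ / 2 * ‖x - u‖ ^ 2) := mul_le_mul_of_nonpos_left hgap (by linarith)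
    _ ≤ -lamb * (ρ / 2 * ‖x - u‖ ^ 2) := mul_le_mul_of_nonneg_right (by linarith) hsq_nonneg
    _ = -(ρ * lamb / 2) * ‖x - u‖ ^ 2 := by ring

theorem stmt18 {X : Type*} [NormedAddCommGroup X] [InnerProductSpace ℝ X]
    [FiniteDimensional ℝ X]
    (P₁ P₂ f : X → ℝ) (ρ σ lam lamb : ℝ)
    (hρ : 0 < ρ) (hσ : 0 < σ) (hlamb : 0 < lamb) (hlam : lamb ≤ lam)
    (x u w ξ gf : X)
    (hgf : HasGradientAt f gf x)
    (hx : P₁ x - P₂ x ≤ σ)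
    (hξ : ∀ z : X, P₂ x + ⟪ξ, z - x⟫ ≤ P₂ z)
    (hw : ∀ z : X, P₁ u + ⟪w, z - u⟫ + ρ / 2 * ‖z - u‖ ^ 2 ≤ P₁ z)
    (hKKT1 : gf + lam • (w - ξ) = 0)
    (hKKT2 : lam * (P₁ u - ⟪ξ, u - x⟫ - P₂ x - σ) = 0) :
    ⟪gf, u - x⟫ ≤ -(ρ * lamb / 2) * ‖x - u‖ ^ 2 :=
  stmt18_general P₁ P₂ ρ σ lam lamb hρ hlamb hlam x u w ξ gf hx hw hKKT1 hKKT2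
end
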